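/- arXiv:1405.0680 — 2 statements merged into one kernel-verified Lean document; each statement's English description precedes it below -/
import Mathlib

section
/- Let Σ, Σ̂ ∈ ℝ^{p×p} be symmetric matrices with eigenvalues λ₁ ≥ … ≥ λ_p and λ̂₁ ≥ … ≥ λ̂_p respectively, fix j ∈ {1, …, p}, and assume δ := min(λ_{j−1} − λ_j, λ_j − λ_{j+1}) > 0 (with λ₀ := ∞, λ_{p+1} := −∞). If the unit vectors v, v̂ ∈ ℝ^p satisfy Σv = λ_j v, Σ̂v̂ = λ̂_j v̂ and v̂ᵀv ≥ 0, then ‖v̂ − v‖ ≤ 2^{3/2} ‖Σ̂ − Σ‖_op / δ. -/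
/-!
In an orthonormal eigenbasis `Q` of `Σ` the gap makes `Qᵀ v = ± e_k`, so with `c = Qᵀ v̂` and
`v̂ᵀ v ≥ 0` we get `‖v̂ - v‖² ≤ 2 (1 - c_k²)`. The residual `(Σ̂ - Σ) v̂` has coordinates
`(λ̂_j - λ_i) c_i`, of total size at most `ε = ‖Σ̂ - Σ‖_op`. By Weyl's inequality
`|λ̂_j - λ_j| ≤ ε`, so when `δ > 2ε` each `|λ̂_j - λ_i|`, `i ≠ k`, is at least `δ / 2` and `δ² (1 - c_k²) ≤ 4ε²`;
when `δ ≤ 2ε` this bound holds trivially.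
-/

open Matrix

noncomputable def frobNorm {m n : Type*} [Fintype m] [Fintype n] (A : Matrix m n ℝ) : ℝ :=
  Real.sqrt (∑ i, ∑ j, (A i j) ^ 2)

noncomputable def opNorm {p q : ℕ} (A : Matrix (Fin p) (Fin q) ℝ) : ℝ :=
  ‖LinearMap.toContinuousLinearMap (Matrix.toEuclideanLin A)‖

open Finset

section Orthogonal

variable {ι R : Type*} [Fintype ι] [DecidableEq ι] [CommRing R] {Q : Matrix ι ι R}

lemma dotProduct_mulVec_mulVec_of_transpose_mul_self (hQ : Qᵀ * Q = 1) (x y : ι → R) :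
    (Q *ᵥ x) ⬝ᵥ (Q *ᵥ y) = x ⬝ᵥ y := by
  rw [dotProduct_mulVec, ← vecMul_transpose, vecMul_vecMul, hQ, vecMul_one]

lemma dotProduct_transpose_mulVec_mulVec_of_transpose_mul_self (hQ : Qᵀ * Q = 1)
    (x y : ι → R) : (Qᵀ *ᵥ x) ⬝ᵥ (Qᵀ *ᵥ y) = x ⬝ᵥ y :=
  dotProduct_mulVec_mulVec_of_transpose_mul_self
    (by rw [transpose_transpose]; exact mul_eq_one_comm.mp hQ) x y

lemma transpose_mulVec_conj_diagonal_mulVec (hQ : Qᵀ * Q = 1) (d x : ι → R) (i : ι) :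
    (Qᵀ *ᵥ ((Q * diagonal d * Qᵀ) *ᵥ x)) i = d i * (Qᵀ *ᵥ x) i := by
  rw [mulVec_mulVec, ← mul_assoc, ← mul_assoc, hQ, one_mul, ← mulVec_mulVec, mulVec_diagonal]

lemma dotProduct_conj_diagonal_mulVec (d x : ι → R) :
    x ⬝ᵥ ((Q * diagonal d * Qᵀ) *ᵥ x) = ∑ i, d i * (Qᵀ *ᵥ x) i ^ 2 := by
  rw [← mulVec_mulVec, ← mulVec_mulVec, dotProduct_mulVec, ← mulVec_transpose]
  simp only [dotProduct, mulVec_diagonal]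
  exact sum_congr rfl fun i _ => by ring

lemma transpose_mulVec_eq_zero_of_ne [IsDomain R] (hQ : Qᵀ * Q = 1) {d v : ι → R} {μ : R}
    (hv : (Q * diagonal d * Qᵀ) *ᵥ v = μ • v) {i : ι} (hi : d i ≠ μ) : (Qᵀ *ᵥ v) i = 0 := by
  have h := transpose_mulVec_conj_diagonal_mulVec hQ d v i
  rw [hv, mulVec_smul, Pi.smul_apply, smul_eq_mul] at h
  exact (mul_eq_zero.mp (by linear_combination -h : (d i - μ) * (Qᵀ *ᵥ v) i = 0)).resolve_left
    (sub_ne_zero.mpr hi)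

end Orthogonal

lemma exists_ne_zero_vanishing_above_mulVec_vanishing_below {ι K : Type*} [Fintype ι]
    [LinearOrder ι] [Field K] (M : Matrix ι ι K) (k : ι) :
    ∃ y ≠ 0, (∀ i, k < i → y i = 0) ∧ ∀ i, i < k → (M *ᵥ y) i = 0 := by
  let g : (ι → K) →ₗ[K] ({i // k < i} → K) × ({i // i < k} → K) :=
    (LinearMap.funLeft K K Subtype.val).prod (LinearMap.funLeft K K Subtype.val ∘ₗ M.mulVecLin)
  have hcard : Fintype.card {i // k < i} + Fintype.card {i // i < k} < Fintype.card ι := by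
    rw [← Fintype.card_subtype_or_disjoint _ _
      (fun _ h₁ h₂ i hi => (h₁ i hi).asymm (h₂ i hi))]
    exact Fintype.card_subtype_lt (x := k) (by simp)
  have hker : LinearMap.ker g ≠ ⊥ := LinearMap.ker_ne_bot_of_finrank_lt <| by
    simpa only [Module.finrank_prod, Module.finrank_fintype_fun_eq_card] using hcard
  obtain ⟨y, hy, hy0⟩ := (Submodule.ne_bot_iff _).mp hker
  simp only [LinearMap.ker_prod, Submodule.mem_inf, LinearMap.mem_ker, funext_iff,
    LinearMap.funLeft_apply, Pi.zero_apply, Subtype.forall, LinearMap.coe_comp,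
    Function.comp_apply, mulVecBilin_apply, g] at hy
  exact ⟨y, hy0, hy⟩

section Antitone

variable {ι : Type*} [Fintype ι] [LinearOrder ι] {d : ι → ℝ} {k : ι}

lemma mul_dotProduct_self_le_sum_mul_sq (hd : Antitone d) {y : ι → ℝ}
    (hy : ∀ i, k < i → y i = 0) : d k * (y ⬝ᵥ y) ≤ ∑ i, d i * y i ^ 2 := by
  rw [dotProduct, mul_sum]
  refine sum_le_sum fun i _ => ?_
  rcases lt_or_ge k i with hki | hik
  · simp [hy i hki]
  · nlinarith [hd hik, mul_self_nonneg (y i)]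

lemma sum_mul_sq_le_mul_dotProduct_self (hd : Antitone d) {z : ι → ℝ}
    (hz : ∀ i, i < k → z i = 0) : ∑ i, d i * z i ^ 2 ≤ d k * (z ⬝ᵥ z) := by
  rw [dotProduct, mul_sum]
  refine sum_le_sum fun i _ => ?_
  rcases lt_or_ge i k with hik | hki
  · simp [hz i hik]
  · nlinarith [hd hki, mul_self_nonneg (z i)]

end Antitone

/-- Weyl's inequality by the Courant–Fischer dimension count: some `x ≠ 0` lies both in the span of
the eigenvectors of the first matrix up to index `k` and in that of the second one from `k` on. -/
lemma le_add_of_forall_dotProduct_mulVec_le {ι : Type*} [Fintype ι] [LinearOrder ι]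
    {Q Qh : Matrix ι ι ℝ} (hQ : Qᵀ * Q = 1) (hQh : Qhᵀ * Qh = 1) {d dh : ι → ℝ}
    (hd : Antitone d) (hdh : Antitone dh) {ε : ℝ}
    (h : ∀ x, x ⬝ᵥ ((Q * diagonal d * Qᵀ) *ᵥ x) ≤
      x ⬝ᵥ ((Qh * diagonal dh * Qhᵀ) *ᵥ x) + ε * (x ⬝ᵥ x)) (k : ι) :
    d k ≤ dh k + ε := by
  obtain ⟨y, hy0, hy, hMy⟩ := exists_ne_zero_vanishing_above_mulVec_vanishing_below (Qhᵀ * Q) k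
  set x := Q *ᵥ y
  have hQx : Qᵀ *ᵥ x = y := by rw [mulVec_mulVec, hQ, one_mulVec]
  have hQhx : Qhᵀ *ᵥ x = (Qhᵀ * Q) *ᵥ y := mulVec_mulVec _ _ _
  have hxx : x ⬝ᵥ x = y ⬝ᵥ y := dotProduct_mulVec_mulVec_of_transpose_mul_self hQ y y
  have hlow : d k * (y ⬝ᵥ y) ≤ x ⬝ᵥ ((Q * diagonal d * Qᵀ) *ᵥ x) := by
    rw [dotProduct_conj_diagonal_mulVec, hQx]
    exact mul_dotProduct_self_le_sum_mul_sq hd hy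
  have hup : x ⬝ᵥ ((Qh * diagonal dh * Qhᵀ) *ᵥ x) ≤ dh k * (y ⬝ᵥ y) := by
    rw [dotProduct_conj_diagonal_mulVec, ← hxx,
      ← dotProduct_transpose_mulVec_mulVec_of_transpose_mul_self hQh x x, hQhx]
    exact sum_mul_sq_le_mul_dotProduct_self hdh hMy
  have hpos : 0 < y ⬝ᵥ y :=
    lt_of_le_of_ne (dotProduct_self_star_nonneg y) (Ne.symm (dotProduct_self_eq_zero.not.mpr hy0))
  have hx := h x
  rw [hxx] at hx
  exact le_of_mul_le_mul_right (by linarith : d k * (y ⬝ᵥ y) ≤ (dh k + ε) * (y ⬝ᵥ y)) hpos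

section OpNorm

variable {p q : ℕ}

lemma norm_toLp_sq {ι : Type*} [Fintype ι] (x : ι → ℝ) :
    ‖WithLp.toLp 2 x‖ ^ 2 = x ⬝ᵥ x := by
  rw [← real_inner_self_eq_norm_sq, EuclideanSpace.inner_eq_star_dotProduct, star_trivial]

lemma norm_toLp_mulVec_le (A : Matrix (Fin p) (Fin q) ℝ) (x : Fin q → ℝ) :
    ‖WithLp.toLp 2 (A *ᵥ x)‖ ≤ opNorm A * ‖WithLp.toLp 2 x‖ := by
  simpa [opNorm] using
    (LinearMap.toContinuousLinearMap (toEuclideanLin A)).le_opNorm (WithLp.toLp 2 x)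

lemma dotProduct_mulVec_self_le (A : Matrix (Fin p) (Fin q) ℝ) (x : Fin q → ℝ) :
    (A *ᵥ x) ⬝ᵥ (A *ᵥ x) ≤ opNorm A ^ 2 * (x ⬝ᵥ x) := by
  rw [← norm_toLp_sq, ← norm_toLp_sq, ← mul_pow]
  exact pow_le_pow_left₀ (norm_nonneg _) (norm_toLp_mulVec_le A x) 2

lemma abs_dotProduct_mulVec_le (A : Matrix (Fin p) (Fin p) ℝ) (x : Fin p → ℝ) :
    |x ⬝ᵥ (A *ᵥ x)| ≤ opNorm A * (x ⬝ᵥ x) := by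
  have hinner : x ⬝ᵥ (A *ᵥ x) = inner ℝ (WithLp.toLp 2 x) (WithLp.toLp 2 (A *ᵥ x)) := by
    rw [EuclideanSpace.inner_eq_star_dotProduct, star_trivial, dotProduct_comm]
  rw [hinner, ← norm_toLp_sq]
  calc _ ≤ ‖WithLp.toLp 2 x‖ * ‖WithLp.toLp 2 (A *ᵥ x)‖ := abs_real_inner_le_norm _ _
    _ ≤ ‖WithLp.toLp 2 x‖ * (opNorm A * ‖WithLp.toLp 2 x‖) := by
      gcongr
      exact norm_toLp_mulVec_le A x
    _ = opNorm A * ‖WithLp.toLp 2 x‖ ^ 2 := by ring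

lemma abs_sub_le_opNorm_sub {Q Qh : Matrix (Fin p) (Fin p) ℝ} (hQ : Qᵀ * Q = 1)
    (hQh : Qhᵀ * Qh = 1) {d dh : Fin p → ℝ} (hd : Antitone d) (hdh : Antitone dh) (k : Fin p) :
    |dh k - d k| ≤ opNorm (Qh * diagonal dh * Qhᵀ - Q * diagonal d * Qᵀ) := by
  set E := Qh * diagonal dh * Qhᵀ - Q * diagonal d * Qᵀ
  have hE : ∀ x, |x ⬝ᵥ ((Qh * diagonal dh * Qhᵀ) *ᵥ x) - x ⬝ᵥ ((Q * diagonal d * Qᵀ) *ᵥ x)|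
      ≤ opNorm E * (x ⬝ᵥ x) := fun x => by
    rw [← dotProduct_sub, ← sub_mulVec]
    exact abs_dotProduct_mulVec_le E x
  have hup := le_add_of_forall_dotProduct_mulVec_le hQh hQ hdh hd (ε := opNorm E)
    (fun x => by linarith [(abs_le.mp (hE x)).2]) k
  have hlow := le_add_of_forall_dotProduct_mulVec_le hQ hQh hd hdh (ε := opNorm E)
    (fun x => by linarith [(abs_le.mp (hE x)).1]) k
  exact abs_le.mpr ⟨by linarith, by linarith⟩

end OpNorm

section EigenCoordinates

variable {ι : Type*} [Fintype ι] {k : ι}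

lemma sq_mul_one_sub_sq_le [DecidableEq ι] {c d : ι → ℝ} {μ ε δ : ℝ} (hc : c ⬝ᵥ c = 1) (hδ : 0 ≤ δ)
    (hgap : ∀ i ≠ k, δ ≤ |d i - d k|) (hμ : |μ - d k| ≤ ε)
    (hres : ∑ i, (μ - d i) ^ 2 * c i ^ 2 ≤ ε ^ 2) :
    δ ^ 2 * (1 - c k ^ 2) ≤ 4 * ε ^ 2 := by
  have hsplit : 1 - c k ^ 2 = ∑ i ∈ univ.erase k, c i ^ 2 := by
    rw [← hc, dotProduct, ← add_sum_erase _ _ (mem_univ k)]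
    simp only [sq, add_sub_cancel_left]
  -- Either the bound is trivial, or `μ` stays `δ / 2` away from every `d i` with `i ≠ k`.
  rcases le_or_gt δ (2 * ε) with hsmall | hlarge
  · have hnonneg : 0 ≤ 1 - c k ^ 2 := hsplit ▸ sum_nonneg fun i _ => sq_nonneg _
    have hle : 1 - c k ^ 2 ≤ 1 := by linarith [sq_nonneg (c k)]
    nlinarith
  · have hfar : ∀ i ≠ k, δ ^ 2 ≤ 4 * (μ - d i) ^ 2 := fun i hi => by
      have htri := abs_sub_le (d i) μ (d k)
      rw [abs_sub_comm (d i) μ] at htri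
      have := hgap i hi
      nlinarith [sq_abs (μ - d i), abs_nonneg (μ - d i)]
    calc δ ^ 2 * (1 - c k ^ 2) = ∑ i ∈ univ.erase k, δ ^ 2 * c i ^ 2 := by rw [hsplit, mul_sum]
      _ ≤ ∑ i ∈ univ.erase k, 4 * ((μ - d i) ^ 2 * c i ^ 2) := sum_le_sum fun i hi => by
        rw [← mul_assoc]
        exact mul_le_mul_of_nonneg_right (hfar i (ne_of_mem_erase hi)) (sq_nonneg _)
      _ ≤ ∑ i, 4 * ((μ - d i) ^ 2 * c i ^ 2) :=
        sum_le_sum_of_subset_of_nonneg (erase_subset _ _) fun i _ _ => by positivity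
      _ ≤ 4 * ε ^ 2 := by rw [← mul_sum]; linarith

lemma dotProduct_sub_self_le {b c : ι → ℝ} (hb : ∀ i ≠ k, b i = 0) (hbb : b ⬝ᵥ b = 1)
    (hcc : c ⬝ᵥ c = 1) (hcb : 0 ≤ c ⬝ᵥ b) :
    (c - b) ⬝ᵥ (c - b) ≤ 2 * (1 - c k ^ 2) := by
  have hsingle : ∀ x : ι → ℝ, x ⬝ᵥ b = x k * b k := fun x => by
    rw [dotProduct, sum_eq_single k (fun i _ hi => by simp [hb i hi]) (by simp)]
  have hck : c k ^ 2 ≤ 1 := by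
    rw [← hcc, dotProduct, sq]
    exact single_le_sum (f := fun i => c i * c i) (fun i _ => mul_self_nonneg _) (mem_univ k)
  rw [hsingle] at hbb hcb
  -- `t = c k * b k` satisfies `t ^ 2 = c k ^ 2 ≤ 1` and `0 ≤ t`, hence `c k ^ 2 ≤ t`.
  have ht : c k * b k ≤ 1 := by nlinarith
  rw [sub_dotProduct, dotProduct_sub, dotProduct_sub, dotProduct_comm b c, hsingle, hsingle,
    hcc, hbb]
  nlinarith

lemma sq_mul_dotProduct_sub_self_le [DecidableEq ι] {Q : Matrix ι ι ℝ} (hQ : Qᵀ * Q = 1) {d : ι → ℝ}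
    {Sh : Matrix ι ι ℝ} {v w : ι → ℝ} {μ ε δ : ℝ}
    (hv : (Q * diagonal d * Qᵀ) *ᵥ v = d k • v) (hw : Sh *ᵥ w = μ • w)
    (hvv : v ⬝ᵥ v = 1) (hww : w ⬝ᵥ w = 1) (hwv : 0 ≤ w ⬝ᵥ v)
    (hδ : 0 < δ) (hgap : ∀ i ≠ k, δ ≤ |d i - d k|) (hμ : |μ - d k| ≤ ε)
    (hres : ((Sh - Q * diagonal d * Qᵀ) *ᵥ w) ⬝ᵥ ((Sh - Q * diagonal d * Qᵀ) *ᵥ w) ≤ ε ^ 2) :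
    δ ^ 2 * ((w - v) ⬝ᵥ (w - v)) ≤ 8 * ε ^ 2 := by
  have horth := dotProduct_transpose_mulVec_mulVec_of_transpose_mul_self hQ
  set c := Qᵀ *ᵥ w
  have hb : ∀ i ≠ k, (Qᵀ *ᵥ v) i = 0 := fun i hi =>
    transpose_mulVec_eq_zero_of_ne hQ hv fun h => by
      have := hgap i hi
      rw [h, sub_self, abs_zero] at this
      linarith
  have hcoord : ∀ i, (Qᵀ *ᵥ ((Sh - Q * diagonal d * Qᵀ) *ᵥ w)) i = (μ - d i) * c i := by
    intro i
    rw [sub_mulVec, mulVec_sub, Pi.sub_apply, hw, mulVec_smul,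
      transpose_mulVec_conj_diagonal_mulVec hQ, Pi.smul_apply, smul_eq_mul, sub_mul]
  have hres' : ∑ i, (μ - d i) ^ 2 * c i ^ 2 ≤ ε ^ 2 := by
    rw [← horth, dotProduct] at hres
    simpa only [hcoord, mul_pow, sq, mul_mul_mul_comm] using hres
  have hdist : (w - v) ⬝ᵥ (w - v) = (c - Qᵀ *ᵥ v) ⬝ᵥ (c - Qᵀ *ᵥ v) := by
    rw [← mulVec_sub, horth]
  have hdist_le := dotProduct_sub_self_le hb (by rw [horth, hvv]) (by rw [horth, hww])
    (by rw [horth]; exact hwv)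
  have hmass := sq_mul_one_sub_sq_le (by rw [horth, hww]) hδ.le hgap hμ hres'
  rw [hdist]
  nlinarith [sq_nonneg δ]

end EigenCoordinates

section ShiftedIndex

variable {p : ℕ} {f : ℕ → ℝ}

lemma antitone_comp_succ (hf : ∀ i j, 1 ≤ i → i ≤ j → j ≤ p → f j ≤ f i) :
    Antitone fun i : Fin p => f (i.1 + 1) :=
  fun a b hab => hf _ _ (by omega) (by simpa using Fin.le_def.mp hab) (by omega)

lemma le_abs_sub_of_gap (hf : ∀ i j, 1 ≤ i → i ≤ j → j ≤ p → f j ≤ f i) {j : ℕ}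
    (hj1 : 1 ≤ j) (hjp : j ≤ p) {δ : ℝ} (hgapl : 1 < j → δ ≤ f (j - 1) - f j)
    (hgapu : j < p → δ ≤ f j - f (j + 1)) {i : ℕ} (hi1 : 1 ≤ i) (hip : i ≤ p) (hij : i ≠ j) :
    δ ≤ |f i - f j| := by
  rcases lt_or_gt_of_ne hij with hlt | hgt
  · have := hf i (j - 1) hi1 (by omega) (by omega)
    exact le_abs.mpr (Or.inl (by linarith [hgapl (by omega)]))
  · have := hf (j + 1) i (by omega) hgt hip
    exact le_abs.mpr (Or.inr (by linarith [hgapu (by omega)]))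

end ShiftedIndex

lemma sqrt_le_rpow_three_halves_mul_div {s ε δ : ℝ} (hδ : 0 < δ) (hε : 0 ≤ ε)
    (h : δ ^ 2 * s ≤ 8 * ε ^ 2) : √s ≤ 2 ^ ((3 : ℝ) / 2) * ε / δ := by
  have h8 : ((2 : ℝ) ^ ((3 : ℝ) / 2)) ^ 2 = 8 := by
    rw [← Real.rpow_natCast, ← Real.rpow_mul (by norm_num)]
    norm_num
  rw [Real.sqrt_le_left (by positivity), div_pow, mul_pow, h8, le_div_iff₀ (by positivity)]
  linarith

theorem stmt4_general
    (p j : ℕ) (hj1 : 1 ≤ j) (hjp : j ≤ p)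
    (lam lamh : ℕ → ℝ)
    (hmono : ∀ i j, 1 ≤ i → i ≤ j → j ≤ p → lam j ≤ lam i)
    (hmonoh : ∀ i j, 1 ≤ i → i ≤ j → j ≤ p → lamh j ≤ lamh i)
    (S Sh : Matrix (Fin p) (Fin p) ℝ)
    (hSspec : ∃ Q : Matrix (Fin p) (Fin p) ℝ, Qᵀ * Q = 1 ∧
      S = Q * Matrix.diagonal (fun i : Fin p => lam (i.1 + 1)) * Qᵀ)
    (hShspec : ∃ Q : Matrix (Fin p) (Fin p) ℝ, Qᵀ * Q = 1 ∧
      Sh = Q * Matrix.diagonal (fun i : Fin p => lamh (i.1 + 1)) * Qᵀ)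
    (δ : ℝ) (hδ : 0 < δ)
    (hgapl : 1 < j → δ ≤ lam (j - 1) - lam j)
    (hgapu : j < p → δ ≤ lam j - lam (j + 1))
    (v vh : Fin p → ℝ) (hv : ∑ i, (v i) ^ 2 = 1) (hvh : ∑ i, (vh i) ^ 2 = 1)
    (hveig : S.mulVec v = lam j • v) (hvheig : Sh.mulVec vh = lamh j • vh)
    (hsign : 0 ≤ ∑ i, vh i * v i) :
    Real.sqrt (∑ i, (vh i - v i) ^ 2) ≤ (2 : ℝ) ^ ((3 : ℝ) / 2) * opNorm (Sh - S) / δ := by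
  obtain ⟨Q, hQ, rfl⟩ := hSspec
  obtain ⟨Qh, hQh, rfl⟩ := hShspec
  set k : Fin p := ⟨j - 1, by omega⟩
  have hk : k.1 + 1 = j := Nat.sub_add_cancel hj1
  have hweyl := abs_sub_le_opNorm_sub hQ hQh (antitone_comp_succ hmono)
    (antitone_comp_succ hmonoh) k
  have hgap : ∀ i ≠ k, δ ≤ |lam (i.1 + 1) - lam (k.1 + 1)| := fun i hi => by
    rw [hk]
    exact le_abs_sub_of_gap hmono hj1 hjp hgapl hgapu (by omega) i.2
      fun h => hi (Fin.ext (by simp only [k]; omega))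
  have hdot : ∀ x : Fin p → ℝ, x ⬝ᵥ x = ∑ i, x i ^ 2 := fun x => by simp only [dotProduct, sq]
  have hres := dotProduct_mulVec_self_le (Qh * diagonal (fun i : Fin p => lamh (i.1 + 1)) * Qhᵀ
    - Q * diagonal (fun i : Fin p => lam (i.1 + 1)) * Qᵀ) vh
  rw [hdot vh, hvh, mul_one] at hres
  have key := sq_mul_dotProduct_sub_self_le hQ (k := k) (by rwa [hk]) hvheig
    (by rwa [hdot]) (by rwa [hdot]) hsign hδ hgap (by rwa [← hk]) hres
  rw [hdot] at key
  exact sqrt_le_rpow_three_halves_mul_div hδ (norm_nonneg _) key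

theorem stmt4
    (p j : ℕ) (hj1 : 1 ≤ j) (hjp : j ≤ p)
    (lam lamh : ℕ → ℝ)
    (hmono : ∀ i j, 1 ≤ i → i ≤ j → j ≤ p → lam j ≤ lam i)
    (hmonoh : ∀ i j, 1 ≤ i → i ≤ j → j ≤ p → lamh j ≤ lamh i)
    (S Sh : Matrix (Fin p) (Fin p) ℝ) (hSsymm : S.IsSymm) (hShsymm : Sh.IsSymm)
    (hSspec : ∃ Q : Matrix (Fin p) (Fin p) ℝ, Qᵀ * Q = 1 ∧
      S = Q * Matrix.diagonal (fun i : Fin p => lam (i.1 + 1)) * Qᵀ)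
    (hShspec : ∃ Q : Matrix (Fin p) (Fin p) ℝ, Qᵀ * Q = 1 ∧
      Sh = Q * Matrix.diagonal (fun i : Fin p => lamh (i.1 + 1)) * Qᵀ)
    (δ : ℝ) (hδ : 0 < δ)
    (hgapl : 1 < j → δ ≤ lam (j - 1) - lam j)
    (hgapu : j < p → δ ≤ lam j - lam (j + 1))
    (v vh : Fin p → ℝ) (hv : ∑ i, (v i) ^ 2 = 1) (hvh : ∑ i, (vh i) ^ 2 = 1)
    (hveig : S.mulVec v = lam j • v) (hvheig : Sh.mulVec vh = lamh j • vh)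
    (hsign : 0 ≤ ∑ i, vh i * v i) :
    Real.sqrt (∑ i, (vh i - v i) ^ 2) ≤ (2 : ℝ) ^ ((3 : ℝ) / 2) * opNorm (Sh - S) / δ :=
  stmt4_general p j hj1 hjp lam lamh hmono hmonoh S Sh hSspec hShspec δ hδ hgapl hgapu v vh hv hvh
    hveig hvheig hsign
end

section
/- Let Σ, Σ̂ ∈ ℝ^{p×p} be symmetric matrices with eigenvalues λ₁ ≥ … ≥ λ_p and λ̂₁ ≥ … ≥ λ̂_p respectively, fix 1 ≤ r ≤ s ≤ p with d := s − r + 1, and set Λ := diag(λ_r, …, λ_s). Let V̂ = (v̂_r, …, v̂_s) ∈ ℝ^{p×d} have orthonormal columns satisfying Σ̂v̂_j = λ̂_j v̂_j for j = r, …, s. Then ‖V̂Λ − ΣV̂‖_F ≤ 2 ‖Σ̂ − Σ‖_F. -/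
/-!
Since `Σ̂ V̂ = V̂ Λ̂` with `Λ̂ = diag(λ̂_r, …, λ̂_s)`, we have
`V̂ Λ - Σ V̂ = V̂ (Λ - Λ̂) + (Σ̂ - Σ) V̂`. Multiplying on the right by a matrix with orthonormal
columns does not increase the Frobenius norm, which bounds the second term by `‖Σ̂ - Σ‖_F`. The
first term has norm `(∑_{j=r}^{s} (λ_j - λ̂_j)²)^{1/2}`, bounded by the same quantity through the
Hoffman–Wielandt inequality `∑_j (λ_j - λ̂_j)² ≤ ‖Σ̂ - Σ‖_F²`. That inequality reduces to
`tr(Σ Σ̂) ≤ ∑_j λ_j λ̂_j`; in eigenbases `tr(Σ Σ̂) = λᵀ D λ̂`, where `D = (U_ij²)` is doubly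
stochastic for the orthogonal matrix `U = Qᵀ Q̂`, and by Birkhoff's theorem `D` is a convex
combination of permutation matrices, for each of which the rearrangement inequality applies.
-/
open Matrix

open Finset

section Frobenius

variable {m n k : Type*} [Fintype m] [Fintype n] [Fintype k]

lemma frobNorm_nonneg (A : Matrix m n ℝ) : 0 ≤ frobNorm A := Real.sqrt_nonneg _

lemma frobNorm_sq_eq_trace (A : Matrix m n ℝ) : frobNorm A ^ 2 = trace (Aᵀ * A) := by
  rw [frobNorm, Real.sq_sqrt (by positivity), trace, sum_comm]
  simp [mul_apply, sq]

lemma frobNorm_add_le (A B : Matrix m n ℝ) : frobNorm (A + B) ≤ frobNorm A + frobNorm B := by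
  let _ := frobeniusSeminormedAddCommGroup (m := m) (n := n) (α := ℝ)
  have frobNorm_eq_norm : ∀ C : Matrix m n ℝ, frobNorm C = ‖C‖ := fun C => by
    simp [frobNorm, frobenius_norm_def, Real.sqrt_eq_rpow, Real.norm_eq_abs]
  simpa only [frobNorm_eq_norm] using norm_add_le A B

lemma frobNorm_le_of_sq_le {m' n' : Type*} [Fintype m'] [Fintype n'] {A : Matrix m n ℝ}
    {B : Matrix m' n' ℝ} (h : frobNorm A ^ 2 ≤ frobNorm B ^ 2) : frobNorm A ≤ frobNorm B :=
  (pow_le_pow_iff_left₀ (frobNorm_nonneg A) (frobNorm_nonneg B) two_ne_zero).mp h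

variable [DecidableEq k]

lemma frobNorm_mul_le_of_transpose_mul_self_eq_one [DecidableEq n] (A : Matrix m n ℝ)
    {V : Matrix n k ℝ} (hV : Vᵀ * V = 1) : frobNorm (A * V) ≤ frobNorm A := by
  set P := V * Vᵀ
  have hPt : Pᵀ = P := by simp [P, transpose_mul]
  have hPP : P * P = P := by
    simp only [P, Matrix.mul_assoc, ← Matrix.mul_assoc Vᵀ V, hV, Matrix.one_mul]
  have hAV : trace ((A * V)ᵀ * (A * V)) = trace (Aᵀ * A * P) := by
    rw [transpose_mul, Matrix.mul_assoc, trace_mul_comm, ← Matrix.mul_assoc, ← Matrix.mul_assoc]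
  have hAP : trace ((A * (1 - P))ᵀ * (A * (1 - P))) = trace (Aᵀ * A) - trace (Aᵀ * A * P) := by
    rw [transpose_mul, transpose_sub, transpose_one, hPt, Matrix.mul_assoc, trace_mul_comm,
      Matrix.mul_assoc, Matrix.mul_assoc]
    have hproj : (1 - P) * (1 - P) = 1 - P := by
      rw [sub_mul, mul_sub, mul_sub, hPP]; simp
    rw [hproj, ← Matrix.mul_assoc, Matrix.mul_sub, Matrix.mul_one, trace_sub]
  have hnonneg : 0 ≤ trace ((A * (1 - P))ᵀ * (A * (1 - P))) :=
    frobNorm_sq_eq_trace (A * (1 - P)) ▸ sq_nonneg _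
  refine frobNorm_le_of_sq_le ?_
  rw [frobNorm_sq_eq_trace, frobNorm_sq_eq_trace]
  linarith

lemma frobNorm_sq_mul_diagonal_of_transpose_mul_self_eq_one {V : Matrix n k ℝ}
    (hV : Vᵀ * V = 1) (c : k → ℝ) : frobNorm (V * diagonal c) ^ 2 = ∑ j, c j ^ 2 := by
  rw [frobNorm_sq_eq_trace, transpose_mul, diagonal_transpose, Matrix.mul_assoc,
    ← Matrix.mul_assoc Vᵀ, hV, Matrix.one_mul, diagonal_mul_diagonal, trace_diagonal]
  simp only [sq]

end Frobenius

section HoffmanWielandt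

variable {n : Type*} [Fintype n] [DecidableEq n]

lemma dotProduct_mulVec_le_of_mem_doublyStochastic {D : Matrix n n ℝ}
    (hD : D ∈ doublyStochastic ℝ n) {a b : n → ℝ} (hab : Monovary a b) :
    a ⬝ᵥ (D *ᵥ b) ≤ a ⬝ᵥ b := by
  obtain ⟨w, hw0, hw1, rfl⟩ := exists_eq_sum_perm_of_mem_doublyStochastic hD
  calc a ⬝ᵥ ((∑ σ, w σ • σ.permMatrix ℝ) *ᵥ b) = ∑ σ, w σ * (a ⬝ᵥ (b ∘ σ)) := by
        simp [sum_mulVec, dotProduct_sum, smul_mulVec, permMatrix_mulVec]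
    _ ≤ ∑ σ, w σ * (a ⬝ᵥ b) := by
        gcongr with σ
        · exact hw0 σ
        · exact hab.sum_mul_comp_perm_le_sum_mul
    _ = a ⬝ᵥ b := by rw [← sum_mul, hw1, one_mul]

lemma of_sq_mem_doublyStochastic {U : Matrix n n ℝ} (hU : Uᵀ * U = 1) :
    of (fun i j => U i j ^ 2) ∈ doublyStochastic ℝ n := by
  have hU' : U * Uᵀ = 1 := mul_eq_one_comm.mp hU
  refine mem_doublyStochastic_iff_sum.mpr ⟨fun i j => sq_nonneg _, fun i => ?_, fun j => ?_⟩
  · simpa [mul_apply, sq] using congrFun (congrFun hU' i) i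
  · simpa [mul_apply, sq] using congrFun (congrFun hU j) j

lemma trace_diagonal_mul_mul_diagonal_mul_transpose {m : Type*} [Fintype m] [DecidableEq m]
    (U : Matrix n m ℝ) (a : n → ℝ) (b : m → ℝ) :
    trace (diagonal a * U * diagonal b * Uᵀ) = a ⬝ᵥ (of (fun i j => U i j ^ 2) *ᵥ b) := by
  simp only [trace, diag_apply, mul_apply (N := Uᵀ), mul_diagonal, diagonal_mul,
    transpose_apply, dotProduct, mulVec, of_apply, mul_sum]
  exact sum_congr rfl fun i _ => sum_congr rfl fun j _ => by ring

lemma trace_conj_diagonal_mul_conj_diagonal (Q R : Matrix n n ℝ) (a b : n → ℝ) :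
    trace (Q * diagonal a * Qᵀ * (R * diagonal b * Rᵀ)) =
      a ⬝ᵥ (of (fun i j => (Qᵀ * R) i j ^ 2) *ᵥ b) := by
  rw [← trace_diagonal_mul_mul_diagonal_mul_transpose, transpose_mul, transpose_transpose,
    Matrix.mul_assoc Q, Matrix.mul_assoc Q, trace_mul_comm Q]
  simp only [Matrix.mul_assoc]

lemma trace_conj_diagonal_mul_self {Q : Matrix n n ℝ} (hQ : Qᵀ * Q = 1) (a : n → ℝ) :
    trace (Q * diagonal a * Qᵀ * (Q * diagonal a * Qᵀ)) = ∑ i, a i ^ 2 := by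
  rw [trace_conj_diagonal_mul_conj_diagonal, hQ]
  simp [one_apply, dotProduct, mulVec, sq]

theorem hoffman_wielandt {Q R : Matrix n n ℝ} (hQ : Qᵀ * Q = 1) (hR : Rᵀ * R = 1)
    {a b : n → ℝ} (hab : Monovary a b) :
    ∑ i, (a i - b i) ^ 2 ≤ frobNorm (R * diagonal b * Rᵀ - Q * diagonal a * Qᵀ) ^ 2 := by
  set A := Q * diagonal a * Qᵀ
  set B := R * diagonal b * Rᵀ
  have hsymm : (B - A)ᵀ = B - A := by
    simp only [A, B, transpose_sub, transpose_mul, transpose_transpose, diagonal_transpose,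
      Matrix.mul_assoc]
  have hUU : (Qᵀ * R)ᵀ * (Qᵀ * R) = 1 := by
    rw [transpose_mul, transpose_transpose, Matrix.mul_assoc, ← Matrix.mul_assoc Q,
      mul_eq_one_comm.mp hQ, Matrix.one_mul, hR]
  have hcross : trace (A * B) ≤ a ⬝ᵥ b := by
    rw [trace_conj_diagonal_mul_conj_diagonal]
    exact dotProduct_mulVec_le_of_mem_doublyStochastic (of_sq_mem_doublyStochastic hUU) hab
  have hexpand : frobNorm (B - A) ^ 2 =
      trace (B * B) + trace (A * A) - 2 * trace (A * B) := by
    rw [frobNorm_sq_eq_trace, hsymm, sub_mul, mul_sub, mul_sub, trace_sub, trace_sub, trace_sub,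
      trace_mul_comm B A]
    ring
  rw [hexpand, trace_conj_diagonal_mul_self hQ, trace_conj_diagonal_mul_self hR]
  have hsum : ∑ i, (a i - b i) ^ 2 = ∑ i, b i ^ 2 + ∑ i, a i ^ 2 - 2 * a ⬝ᵥ b := by
    simp only [dotProduct, sub_sq, sum_add_distrib, sum_sub_distrib, mul_sum, mul_assoc]
    ring
  linarith

end HoffmanWielandt

lemma mul_eq_mul_diagonal_of_forall_mulVec {R m k : Type*} [CommSemiring R] [Fintype m]
    [Fintype k] [DecidableEq k] {A : Matrix m m R} {V : Matrix m k R} {c : k → R}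
    (h : ∀ j, A *ᵥ (fun i => V i j) = c j • fun i => V i j) : A * V = V * diagonal c := by
  ext i j
  rw [mul_diagonal, mul_comm]
  simpa [mulVec, dotProduct, mul_apply] using congrFun (h j) i

lemma sum_fin_add_le_sum_fin {g : ℕ → ℝ} (hg : ∀ i, 0 ≤ g i) {r d p : ℕ} (h : r + d ≤ p) :
    ∑ j : Fin d, g (r + j) ≤ ∑ i : Fin p, g i := by
  rw [Fin.sum_univ_eq_sum_range (fun j => g (r + j)), Fin.sum_univ_eq_sum_range g,
    ← Nat.add_sub_cancel_left (n := r) (m := d), ← sum_Ico_eq_sum_range]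
  exact sum_le_sum_of_subset_of_nonneg (fun i hi => by simp at hi ⊢; omega) fun i _ _ => hg i

lemma antitone_fin_add_one {f : ℕ → ℝ} {p : ℕ}
    (hf : ∀ i j, 1 ≤ i → i ≤ j → j ≤ p → f j ≤ f i) : Antitone fun i : Fin p => f (i + 1) :=
  fun i j hij => hf _ _ (by omega) (by simpa using hij) j.isLt

theorem stmt11_general
    (p r s d : ℕ) (hr : 1 ≤ r) (hrs : r ≤ s) (hsp : s ≤ p) (hd : d = s - r + 1)
    (lam lamh : ℕ → ℝ)
    (hmono : ∀ i j, 1 ≤ i → i ≤ j → j ≤ p → lam j ≤ lam i)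
    (hmonoh : ∀ i j, 1 ≤ i → i ≤ j → j ≤ p → lamh j ≤ lamh i)
    (S Sh : Matrix (Fin p) (Fin p) ℝ)
    (hSspec : ∃ Q : Matrix (Fin p) (Fin p) ℝ, Qᵀ * Q = 1 ∧
      S = Q * Matrix.diagonal (fun i : Fin p => lam (i.1 + 1)) * Qᵀ)
    (hShspec : ∃ Q : Matrix (Fin p) (Fin p) ℝ, Qᵀ * Q = 1 ∧
      Sh = Q * Matrix.diagonal (fun i : Fin p => lamh (i.1 + 1)) * Qᵀ)
    (Vh : Matrix (Fin p) (Fin d) ℝ) (hVh : Vhᵀ * Vh = 1)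
    (hVheig : ∀ j : Fin d, Sh.mulVec (fun i => Vh i j) = lamh (r + j.1) • (fun i => Vh i j)) :
    frobNorm (Vh * Matrix.diagonal (fun j : Fin d => lam (r + j.1)) - S * Vh) ≤
      2 * frobNorm (Sh - S) := by
  obtain ⟨Q, hQ, hS⟩ := hSspec
  obtain ⟨R, hR, hSh⟩ := hShspec
  set δ : Fin d → ℝ := fun j => lam (r + j.1) - lamh (r + j.1)
  have hdecomp : Vh * diagonal (fun j : Fin d => lam (r + j.1)) - S * Vh =
      Vh * diagonal δ + (Sh - S) * Vh := by
    rw [Matrix.sub_mul, mul_eq_mul_diagonal_of_forall_mulVec hVheig, ← diagonal_sub,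
      Matrix.mul_sub]
    abel
  have hδ : ∑ j, δ j ^ 2 ≤ frobNorm (Sh - S) ^ 2 := calc
    ∑ j, δ j ^ 2 = ∑ j : Fin d, (lam (r - 1 + j + 1) - lamh (r - 1 + j + 1)) ^ 2 :=
        sum_congr rfl fun j _ => by simp only [δ, show r - 1 + j + 1 = r + j by omega]
    _ ≤ ∑ i : Fin p, (lam (i + 1) - lamh (i + 1)) ^ 2 :=
        sum_fin_add_le_sum_fin (g := fun i => (lam (i + 1) - lamh (i + 1)) ^ 2)
          (fun _ => sq_nonneg _) (by omega)
    _ ≤ frobNorm (Sh - S) ^ 2 := hS ▸ hSh ▸ hoffman_wielandt hQ hR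
        ((antitone_fin_add_one hmono).monovary (antitone_fin_add_one hmonoh))
  calc frobNorm (Vh * diagonal (fun j : Fin d => lam (r + j.1)) - S * Vh)
      ≤ frobNorm (Vh * diagonal δ) + frobNorm ((Sh - S) * Vh) :=
        hdecomp ▸ frobNorm_add_le _ _
    _ ≤ frobNorm (Sh - S) + frobNorm (Sh - S) := by
        gcongr
        · exact frobNorm_le_of_sq_le <|
            (frobNorm_sq_mul_diagonal_of_transpose_mul_self_eq_one hVh δ).trans_le hδ
        · exact frobNorm_mul_le_of_transpose_mul_self_eq_one _ hVh
    _ = 2 * frobNorm (Sh - S) := by ring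

theorem stmt11
    (p r s d : ℕ) (hr : 1 ≤ r) (hrs : r ≤ s) (hsp : s ≤ p) (hd : d = s - r + 1)
    (lam lamh : ℕ → ℝ)
    (hmono : ∀ i j, 1 ≤ i → i ≤ j → j ≤ p → lam j ≤ lam i)
    (hmonoh : ∀ i j, 1 ≤ i → i ≤ j → j ≤ p → lamh j ≤ lamh i)
    (S Sh : Matrix (Fin p) (Fin p) ℝ) (hSsymm : S.IsSymm) (hShsymm : Sh.IsSymm)
    (hSspec : ∃ Q : Matrix (Fin p) (Fin p) ℝ, Qᵀ * Q = 1 ∧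
      S = Q * Matrix.diagonal (fun i : Fin p => lam (i.1 + 1)) * Qᵀ)
    (hShspec : ∃ Q : Matrix (Fin p) (Fin p) ℝ, Qᵀ * Q = 1 ∧
      Sh = Q * Matrix.diagonal (fun i : Fin p => lamh (i.1 + 1)) * Qᵀ)
    (Vh : Matrix (Fin p) (Fin d) ℝ) (hVh : Vhᵀ * Vh = 1)
    (hVheig : ∀ j : Fin d, Sh.mulVec (fun i => Vh i j) = lamh (r + j.1) • (fun i => Vh i j)) :
    frobNorm (Vh * Matrix.diagonal (fun j : Fin d => lam (r + j.1)) - S * Vh) ≤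
      2 * frobNorm (Sh - S) :=
  stmt11_general p r s d hr hrs hsp hd lam lamh hmono hmonoh S Sh hSspec hShspec Vh hVh hVheig
end
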